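/- Let G be a controllable graph on n vertices with walk matrix W(G), and let dₙ be the last invariant factor of W(G). If Q is a regular orthogonal matrix with QᵀA(G)Q equal to the adjacency matrix of some graph, then the level ℓ(Q) divides dₙ. -/
import Mathlib

open Matrix

def IsUnimodular {n : ℕ} (U : Matrix (Fin n) (Fin n) ℤ) : Prop := IsUnit U.det

def IsSNF {n : ℕ} (M : Matrix (Fin n) (Fin n) ℤ) (d : Fin n → ℤ) : Prop :=
  (∃ U V : Matrix (Fin n) (Fin n) ℤ, IsUnimodular U ∧ IsUnimodular V ∧
      U * M * V = Matrix.diagonal d) ∧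
  (∀ i, 0 ≤ d i) ∧ (∀ i j : Fin n, i ≤ j → d i ∣ d j)

/-- Symmetric 0-1 matrix with zero diagonal. -/
def IsAdjacency {n : ℕ} (M : Matrix (Fin n) (Fin n) ℤ) : Prop :=
  Mᵀ = M ∧ (∀ i, M i i = 0) ∧ (∀ i j, M i j = 0 ∨ M i j = 1)

/-- The walk matrix `[e, Ae, …, A^{n-1}e]`. -/
def walkMatrix {n : ℕ} (A : Matrix (Fin n) (Fin n) ℤ) : Matrix (Fin n) (Fin n) ℤ :=
  Matrix.of fun i j => ((A ^ (j : ℕ)).mulVec (fun _ => 1)) i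

def IsLevel {n : ℕ} (ℓ : ℕ) (Q : Matrix (Fin n) (Fin n) ℚ) : Prop :=
  0 < ℓ ∧ (∀ i j, ∃ z : ℤ, (ℓ : ℚ) * Q i j = (z : ℚ)) ∧
    ∀ k : ℕ, 0 < k → (∀ i j, ∃ z : ℤ, (k : ℚ) * Q i j = (z : ℚ)) → ℓ ≤ k

/-- The level divides any positive `k` with `k • Q` integral. -/
lemma level_dvd {n : ℕ} {Q : Matrix (Fin n) (Fin n) ℚ} {ℓ k : ℕ}
    (hℓ : IsLevel ℓ Q) (hk : 0 < k)
    (h : ∀ i j, ∃ z : ℤ, (k : ℚ) * Q i j = (z : ℚ)) : ℓ ∣ k := by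
  obtain ⟨hpos, hint, hmin⟩ := hℓ
  rcases Nat.eq_zero_or_pos (k % ℓ) with h0 | hr
  · exact Nat.dvd_of_mod_eq_zero h0
  · exfalso
    have hrint : ∀ i j, ∃ z : ℤ, ((k % ℓ : ℕ) : ℚ) * Q i j = (z : ℚ) := by
      intro i j
      obtain ⟨z, hz⟩ := h i j
      obtain ⟨w, hw⟩ := hint i j
      refine ⟨z - (k / ℓ : ℕ) * w, ?_⟩
      have hk' : ((k % ℓ : ℕ) : ℚ) = (k : ℚ) - ((k / ℓ : ℕ) : ℚ) * (ℓ : ℚ) := by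
        have h := Nat.mod_add_div k ℓ
        have h2 : ((k % ℓ + ℓ * (k / ℓ) : ℕ) : ℚ) = (k : ℚ) := by exact_mod_cast congrArg (Nat.cast : ℕ → ℚ) h
        push_cast at h2
        linarith
      rw [hk', sub_mul, hz, mul_assoc, hw]
      rw [Int.cast_sub, Int.cast_mul, Int.cast_natCast]
    have h1 : ℓ ≤ k % ℓ := hmin _ hr hrint
    have h2 : k % ℓ < ℓ := Nat.mod_lt _ hpos
    omega

theorem stmt3 (n : ℕ) (A : Matrix (Fin (n + 1)) (Fin (n + 1)) ℤ)
    (hA : IsAdjacency A)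
    (hctrl : (walkMatrix A).det ≠ 0)
    (d : Fin (n + 1) → ℤ) (hd : IsSNF (walkMatrix A) d)
    (Q : Matrix (Fin (n + 1)) (Fin (n + 1)) ℚ)
    (hO : Qᵀ * Q = 1) (hreg : Q.mulVec (fun _ => 1) = fun _ => 1)
    (B : Matrix (Fin (n + 1)) (Fin (n + 1)) ℤ) (hB : IsAdjacency B)
    (hQ : Qᵀ * A.map (Int.cast : ℤ → ℚ) * Q = B.map (Int.cast : ℤ → ℚ))
    (ℓ : ℕ) (hℓ : IsLevel ℓ Q) :
    (ℓ : ℤ) ∣ d (Fin.last n) := by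
  classical
  obtain ⟨⟨U, V, hU, hV, hUV⟩, hd0, hdvd⟩ := hd
  set φ : Matrix (Fin (n+1)) (Fin (n+1)) ℤ →+* Matrix (Fin (n+1)) (Fin (n+1)) ℚ := (Int.castRingHom ℚ).mapMatrix with hφ
  have hφapp : ∀ M : Matrix (Fin (n+1)) (Fin (n+1)) ℤ, φ M = M.map (Int.cast : ℤ → ℚ) :=
    fun M => rfl
  set A' := A.map (Int.cast : ℤ → ℚ) with hA'
  set B' := B.map (Int.cast : ℤ → ℚ) with hB'
  have hQQT : Q * Qᵀ = 1 := mul_eq_one_comm.mp hO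
  -- powers
  have hpow : ∀ k : ℕ, B' ^ k = Qᵀ * A' ^ k * Q := by
    intro k
    induction k with
    | zero => simp [hO]
    | succ k ih =>
      rw [pow_succ, pow_succ, ih, ← hQ]
      simp only [Matrix.mul_assoc]
      rw [← Matrix.mul_assoc Q Qᵀ, hQQT, Matrix.one_mul]
  -- map of powers
  have hmappow : ∀ (M : Matrix (Fin (n+1)) (Fin (n+1)) ℤ) (k : ℕ),
      (M ^ k).map (Int.cast : ℤ → ℚ) = (M.map (Int.cast : ℤ → ℚ)) ^ k := by
    intro M k
    simpa [hφapp] using map_pow φ M k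
  -- Qᵀ e = e
  have hQTe : Qᵀ.mulVec (fun _ => 1) = fun _ => 1 := by
    conv_lhs => rw [← hreg]
    rw [Matrix.mulVec_mulVec, hO, Matrix.one_mulVec]
  -- walk matrices relation
  have hW : (walkMatrix B).map (Int.cast : ℤ → ℚ) = Qᵀ * (walkMatrix A).map (Int.cast : ℤ → ℚ) := by
    ext i j
    have hcolA : ∀ i, ((walkMatrix A).map (Int.cast : ℤ → ℚ)) i j = (A' ^ (j : ℕ)).mulVec (fun _ => 1) i := by
      intro i
      simp only [Matrix.map_apply, walkMatrix, Matrix.of_apply]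
      rw [← hmappow]
      simp [Matrix.mulVec, dotProduct, Matrix.map_apply]
    have hcolB : ((walkMatrix B).map (Int.cast : ℤ → ℚ)) i j = (B' ^ (j : ℕ)).mulVec (fun _ => 1) i := by
      simp only [Matrix.map_apply, walkMatrix, Matrix.of_apply]
      rw [← hmappow]
      simp [Matrix.mulVec, dotProduct, Matrix.map_apply]
    rw [hcolB]
    have hcolfun : (fun k => ((walkMatrix A).map (Int.cast : ℤ → ℚ)) k j)
        = (A' ^ (j : ℕ)).mulVec (fun _ => 1) := funext hcolA
    have hstep : (Qᵀ * (walkMatrix A).map (Int.cast : ℤ → ℚ)) i j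
        = (Qᵀ.mulVec ((A' ^ (j : ℕ)).mulVec (fun _ => 1))) i := by
      rw [← hcolfun]
      simp [Matrix.mul_apply, Matrix.mulVec, dotProduct]
    rw [hstep, Matrix.mulVec_mulVec]
    have hQTA : Qᵀ * A' ^ (j : ℕ) = B' ^ (j : ℕ) * Qᵀ := by
      rw [hpow]
      simp only [Matrix.mul_assoc]
      rw [hQQT, Matrix.mul_one]
    rw [hQTA, ← Matrix.mulVec_mulVec, hQTe]
  -- cast SNF
  have hUV' : U.map (Int.cast : ℤ → ℚ) * ((walkMatrix A).map (Int.cast : ℤ → ℚ)) * V.map (Int.cast : ℤ → ℚ)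
      = Matrix.diagonal (fun i => (d i : ℚ)) := by
    have h := congrArg φ hUV
    simp only [_root_.map_mul] at h
    rw [hφapp, hφapp, hφapp, hφapp] at h
    rw [h]
    exact Matrix.diagonal_map (by simp)
  set WA' := (walkMatrix A).map (Int.cast : ℤ → ℚ) with hWA'
  set WB' := (walkMatrix B).map (Int.cast : ℤ → ℚ) with hWB'
  set U' := U.map (Int.cast : ℤ → ℚ) with hU'
  set V' := V.map (Int.cast : ℤ → ℚ) with hV'
  set D' := Matrix.diagonal (fun i => (d i : ℚ)) with hD'
  -- determinants / units
  have hdetWA : WA'.det ≠ 0 := by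
    rw [hWA', ← hφapp, ← RingHom.map_det]
    simpa using hctrl
  have hWAunit : IsUnit WA'.det := isUnit_iff_ne_zero.mpr hdetWA
  have hUunit : IsUnit U'.det := by
    rw [hU', ← hφapp, ← RingHom.map_det]
    exact hU.map (Int.castRingHom ℚ)
  have hVunit : IsUnit V'.det := by
    rw [hV', ← hφapp, ← RingHom.map_det]
    exact hV.map (Int.castRingHom ℚ)
  -- d i positive
  have hdne : ∀ i, d i ≠ 0 := by
    have hprod : (∏ i, d i) ≠ 0 := by
      rw [← Matrix.det_diagonal, ← hUV]
      simp only [Matrix.det_mul]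
      exact mul_ne_zero (mul_ne_zero (IsUnit.ne_zero hU) hctrl) (IsUnit.ne_zero hV)
    intro i hi
    exact hprod (Finset.prod_eq_zero (Finset.mem_univ i) hi)
  have hDunit : IsUnit D'.det := by
    rw [hD', Matrix.det_diagonal]
    refine isUnit_iff_ne_zero.mpr (Finset.prod_ne_zero_iff.mpr fun i _ => ?_)
    exact_mod_cast hdne i
  -- Qᵀ = WB' * WA'⁻¹
  have hQT : Qᵀ = WB' * WA'⁻¹ := by
    have h1 : Qᵀ * WA' * WA'⁻¹ = WB' * WA'⁻¹ := by rw [← hW]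
    rwa [Matrix.mul_assoc, Matrix.mul_nonsing_inv _ hWAunit, Matrix.mul_one] at h1
  -- WA'⁻¹ = V' * (D'⁻¹ * U')
  have hUW : U' * WA' = D' * V'⁻¹ := by
    have h1 : U' * WA' * V' * V'⁻¹ = D' * V'⁻¹ := by rw [hUV']
    rwa [Matrix.mul_assoc (U' * WA'), Matrix.mul_nonsing_inv _ hVunit, Matrix.mul_one] at h1
  have hWAinv : WA'⁻¹ = V' * (D'⁻¹ * U') := by
    refine Matrix.inv_eq_left_inv ?_
    rw [Matrix.mul_assoc V', Matrix.mul_assoc D'⁻¹, hUW, ← Matrix.mul_assoc D'⁻¹,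
      Matrix.nonsing_inv_mul _ hDunit, Matrix.one_mul, Matrix.mul_nonsing_inv _ hVunit]
  -- choose cofactors
  have hcex : ∀ i, ∃ c : ℤ, d (Fin.last n) = d i * c := fun i => hdvd i (Fin.last n) (Fin.le_last i)
  choose c hc using hcex
  -- the scaled inverse diagonal is integral
  have hDinv : D'⁻¹ = Matrix.diagonal (fun i => ((d i : ℚ))⁻¹) := by
    refine Matrix.inv_eq_left_inv ?_
    rw [hD', Matrix.diagonal_mul_diagonal]
    have : (fun i => ((d i : ℚ))⁻¹ * (d i : ℚ)) = fun _ => (1 : ℚ) := by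
      funext i
      exact inv_mul_cancel₀ (by exact_mod_cast hdne i)
    rw [this, Matrix.diagonal_one]
  have hDscaled : ((d (Fin.last n) : ℚ)) • D'⁻¹ = (Matrix.diagonal c).map (Int.cast : ℤ → ℚ) := by
    rw [hDinv, Matrix.diagonal_map (by simp)]
    ext i j
    rcases eq_or_ne i j with rfl | hij
    · simp only [Matrix.smul_apply, Matrix.diagonal_apply_eq, smul_eq_mul]
      have hdi : (d i : ℚ) ≠ 0 := by exact_mod_cast hdne i
      rw [hc i]
      push_cast
      rw [mul_comm ((d i : ℚ)), mul_assoc, mul_inv_cancel₀ hdi, mul_one]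
    · simp [Matrix.diagonal_apply_ne _ hij]
  -- the integral matrix
  set N : Matrix (Fin (n+1)) (Fin (n+1)) ℤ := walkMatrix B * (V * (Matrix.diagonal c * U)) with hN
  have hNmap : N.map (Int.cast : ℤ → ℚ) = (d (Fin.last n) : ℚ) • Qᵀ := by
    have : N.map (Int.cast : ℤ → ℚ)
        = WB' * (V' * ((Matrix.diagonal c).map (Int.cast : ℤ → ℚ) * U')) := by
      rw [hN, ← hφapp]
      simp only [_root_.map_mul]
      rw [hφapp, hφapp, hφapp, hφapp]
    rw [this, ← hDscaled, hQT, hWAinv]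
    rw [Matrix.smul_mul, Matrix.mul_smul, Matrix.mul_smul]
  -- conclude
  have hdn_pos : 0 < d (Fin.last n) := lt_of_le_of_ne (hd0 _) (Ne.symm (hdne _))
  set k := (d (Fin.last n)).toNat with hk
  have hkd : (k : ℤ) = d (Fin.last n) := Int.toNat_of_nonneg (hd0 _)
  have hkpos : 0 < k := by omega
  have hint : ∀ i j, ∃ z : ℤ, (k : ℚ) * Q i j = (z : ℚ) := by
    intro i j
    refine ⟨N j i, ?_⟩
    have hentry := congrFun (congrFun hNmap j) i
    simp only [Matrix.map_apply, Matrix.smul_apply, Matrix.transpose_apply, smul_eq_mul] at hentry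
    have hkq : ((k : ℕ) : ℚ) = ((d (Fin.last n) : ℤ) : ℚ) := by exact_mod_cast hkd
    rw [hkq]
    exact hentry.symm
  have hdvdk : ℓ ∣ k := level_dvd hℓ hkpos hint
  rw [← hkd]
  exact_mod_cast hdvdk
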